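/- For all L_[→]-formulas C and D: ||C|| ⊆ ||D|| if and only if ⊢_{WF_[→]} C→D, where ||A|| is the set of all WF_[→]-theories containing A. -/
import Mathlib


/-- Implicational formulas: built from propositional variables using only `→`. -/
inductive Fm : Type
  | var : ℕ → Fm
  | imp : Fm → Fm → Fm

/-- `chain [A₁,…,Aₙ] E` is the formula `A₁→(A₂→(⋯→(Aₙ→E)⋯))` (and `E` when n = 0). -/
def chain : List Fm → Fm → Fm
  | [], E => E
  | A :: L, E => Fm.imp A (chain L E)

/-- Theorems of the Hilbert system `WF_[→]`. -/
inductive WFThm : Fm → Prop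
  | id (A : Fm) : WFThm (A.imp A)
  | mp {A B : Fm} : WFThm A → WFThm (A.imp B) → WFThm B
  | afort {A : Fm} (B : Fm) : WFThm A → WFThm (B.imp A)
  | trans {A B C : Fm} : WFThm (A.imp B) → WFThm (B.imp C) → WFThm (A.imp C)
  | equiv {A B C D : Fm} :
      WFThm (A.imp B) → WFThm (B.imp A) → WFThm (C.imp D) → WFThm (D.imp C) →
      WFThm ((A.imp C).imp (B.imp D))

/-- `Δ` is a `WF_[→]`-theory. -/
def WFTheory (Δ : Set Fm) : Prop :=
  (∀ A B : Fm, WFThm (A.imp B) → A ∈ Δ → B ∈ Δ) ∧ (∀ A : Fm, WFThm A → A ∈ Δ)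

/-- `‖A‖` is the set of all `WF_[→]`-theories containing `A`. -/
def truthSetWF (A : Fm) : Set (Set Fm) := {Δ | WFTheory Δ ∧ A ∈ Δ}

/-- `‖C‖ ⊆ ‖D‖` iff `⊢_{WF_[→]} C → D`. -/
theorem truthSet_subset_iff (C D : Fm) :
    truthSetWF C ⊆ truthSetWF D ↔ WFThm (C.imp D) := by
  constructor
  · intro h
    have hΔ : ({B | WFThm (C.imp B)} : Set Fm) ∈ truthSetWF C := by
      refine ⟨⟨fun A B hAB hA => WFThm.trans hA hAB, fun A hA => WFThm.afort C hA⟩, WFThm.id C⟩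
    exact (h hΔ).2
  · intro h Δ hΔ
    exact ⟨hΔ.1, hΔ.1.1 C D h hΔ.2⟩
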